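/- arXiv:1311.3022 — 2 statements merged into one kernel-verified Lean document; each statement's English description precedes it below -/
import Mathlib

section
/- Let (x_k^α, r_k^α) and (x_k^β, r_k^β) be essentially different blowup sequences of a sequence of harmonic maps, satisfying the normalization assumption that whenever r_k^α/r_k^β → 0, either |x_k^α − x_k^β|/r_k^β → ∞ or (x_k^α − x_k^β)/r_k^β converges. Define (x_k^α, r_k^α) < (x_k^β, r_k^β) if r_k^α/r_k^β → 0 and (x_k^α − x_k^β)/r_k^β converges. Then (x_k^α, r_k^α) < (x_k^β, r_k^β) if and only if there exists R > 0 such that for all sufficiently large k, the disk D_{R r_k^α}(x_k^α) is contained in D_{R r_k^β}(x_k^β). -/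
/-!
In a real normed space, `ball x r ⊆ ball y s` (with `r > 0`) holds exactly when
`dist x y + r ≤ s`: otherwise moving `x` a little further away from `y` leaves `ball y s`
while staying in `ball x r`. Dividing by `r_k^β`, nesting of the disks becomes
`‖x_k^α - x_k^β‖ / r_k^β + R r_k^α / r_k^β ≤ R`. If `(x^α, r^α) < (x^β, r^β)` with
`(x_k^α - x_k^β) / r_k^β → z`, the left side tends to `‖z‖`, so `R = ‖z‖ + 1` works.
Conversely the inequality bounds both `r_k^α / r_k^β` and `‖x_k^α - x_k^β‖ / r_k^β`; essential
difference then leaves only `r_k^α / r_k^β → 0`, and the dichotomy only convergence of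
`(x_k^α - x_k^β) / r_k^β`.
-/

open Topology Metric Set Filter

noncomputable section

abbrev E2 := EuclideanSpace ℝ (Fin 2)

/-- Two blowup sequences are essentially different. -/
def EssDiff (x1 : ℕ → E2) (r1 : ℕ → ℝ) (x2 : ℕ → E2) (r2 : ℕ → ℝ) : Prop :=
  Tendsto (fun k => r1 k / r2 k) atTop atTop ∨
  Tendsto (fun k => r2 k / r1 k) atTop atTop ∨
  Tendsto (fun k => ‖x1 k - x2 k‖ / (r1 k + r2 k)) atTop atTop

/-- The dichotomy (normalization) assumption: whenever `r1/r2 → 0`, either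
`|x1 - x2|/r2 → ∞` or `(x1 - x2)/r2` converges. -/
def Dichotomy (x1 : ℕ → E2) (r1 : ℕ → ℝ) (x2 : ℕ → E2) (r2 : ℕ → ℝ) : Prop :=
  Tendsto (fun k => r1 k / r2 k) atTop (nhds 0) →
    (Tendsto (fun k => ‖x1 k - x2 k‖ / r2 k) atTop atTop ∨
      ∃ z : E2, Tendsto (fun k => (r2 k)⁻¹ • (x1 k - x2 k)) atTop (nhds z))

/-- The ordering `(x1, r1) < (x2, r2)` on blowup sequences. -/
def BlowupLT (x1 : ℕ → E2) (r1 : ℕ → ℝ) (x2 : ℕ → E2) (r2 : ℕ → ℝ) : Prop :=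
  Tendsto (fun k => r1 k / r2 k) atTop (nhds 0) ∧
    ∃ z : E2, Tendsto (fun k => (r2 k)⁻¹ • (x1 k - x2 k)) atTop (nhds z)

section NormedSpace

variable {E : Type*} [NormedAddCommGroup E] [NormedSpace ℝ E] [Nontrivial E]

theorem exists_sameRay_norm_eq (v : E) {t : ℝ} (ht : 0 ≤ t) : ∃ w : E, SameRay ℝ v w ∧ ‖w‖ = t := by
  rcases eq_or_ne v 0 with rfl | hv
  · obtain ⟨w, hw⟩ := exists_norm_eq E ht
    exact ⟨w, SameRay.zero_left w, hw⟩
  · refine ⟨(t / ‖v‖) • v, SameRay.sameRay_nonneg_smul_right v (by positivity), ?_⟩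
    rw [norm_smul, Real.norm_of_nonneg (by positivity), div_mul_cancel₀ t (norm_ne_zero_iff.2 hv)]

theorem Metric.ball_subset_ball_iff {x y : E} {r s : ℝ} (hr : 0 < r) :
    ball x r ⊆ ball y s ↔ dist x y + r ≤ s := by
  refine ⟨fun h => ?_, fun h => ball_subset_ball' (by linarith)⟩
  by_contra! hlt
  rw [dist_eq_norm] at hlt
  -- push `x` away from `y` by `t < r`; the new point is at distance `‖x - y‖ + t ≥ s` from `y`
  obtain ⟨w, hray, hw⟩ := exists_sameRay_norm_eq (x - y) (le_max_left 0 (s - ‖x - y‖))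
  have hmem : x + w ∈ ball x r := by
    rw [mem_ball, dist_eq_norm, add_sub_cancel_left, hw]
    exact max_lt hr (by linarith)
  have hfar : ‖x + w - y‖ = ‖x - y‖ + max 0 (s - ‖x - y‖) := by
    rw [add_sub_right_comm, hray.norm_add, hw]
  have := mem_ball_iff_norm.1 (h hmem)
  linarith [le_max_right 0 (s - ‖x - y‖)]

theorem ball_mul_subset_ball_mul_iff {x y : E} {r s R : ℝ} (hr : 0 < r) (hs : 0 < s) (hR : 0 < R) :
    ball x (R * r) ⊆ ball y (R * s) ↔ ‖x - y‖ / s + R * (r / s) ≤ R := by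
  rw [Metric.ball_subset_ball_iff (mul_pos hR hr), dist_eq_norm, mul_div, ← add_div, div_le_iff₀ hs]

end NormedSpace

theorem EssDiff.tendsto_div_zero_of_eventually_le {x1 x2 : ℕ → E2} {r1 r2 : ℕ → ℝ}
    (hdiff : EssDiff x1 r1 x2 r2) (hr1 : ∀ k, 0 < r1 k) (hr2 : ∀ k, 0 < r2 k) {C D : ℝ}
    (hratio : ∀ᶠ k in atTop, r1 k / r2 k ≤ C) (hdist : ∀ᶠ k in atTop, ‖x1 k - x2 k‖ / r2 k ≤ D) :
    Tendsto (fun k => r1 k / r2 k) atTop (𝓝 0) := by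
  rcases hdiff with h | h | h
  · exact absurd ⟨C, hratio⟩ (not_isBoundedUnder_of_tendsto_atTop h)
  · exact h.inv_tendsto_atTop.congr fun k => inv_div _ _
  · refine absurd ⟨D, eventually_map.2 ?_⟩ (not_isBoundedUnder_of_tendsto_atTop h)
    filter_upwards [hdist] with k hk
    calc ‖x1 k - x2 k‖ / (r1 k + r2 k) ≤ ‖x1 k - x2 k‖ / r2 k :=
          div_le_div_of_nonneg_left (norm_nonneg _) (hr2 k) (by linarith [hr1 k])
      _ ≤ D := hk

theorem blowupLT_iff_disks_nested_general
    (xa xb : ℕ → E2) (ra rb : ℕ → ℝ)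
    (hra : ∀ k, 0 < ra k) (hrb : ∀ k, 0 < rb k)
    (hdiff : EssDiff xa ra xb rb)
    (hd1 : Dichotomy xa ra xb rb) :
    BlowupLT xa ra xb rb ↔
      ∃ R : ℝ, 0 < R ∧ ∀ᶠ k in atTop,
        Metric.ball (xa k) (R * ra k) ⊆ Metric.ball (xb k) (R * rb k) := by
  constructor
  · rintro ⟨h0, z, hz⟩
    have hnorm : Tendsto (fun k => ‖xa k - xb k‖ / rb k) atTop (𝓝 ‖z‖) := by
      refine hz.norm.congr fun k => ?_
      rw [norm_smul, norm_inv, Real.norm_of_nonneg (hrb k).le, inv_mul_eq_div]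
    have hlim := hnorm.add (h0.const_mul (‖z‖ + 1))
    rw [mul_zero, add_zero] at hlim
    refine ⟨‖z‖ + 1, by positivity, ?_⟩
    filter_upwards [hlim.eventually_le_const (lt_add_one _)] with k hk
    exact (ball_mul_subset_ball_mul_iff (hra k) (hrb k) (by positivity)).2 hk
  · rintro ⟨R, hR, hnest⟩
    have hbound : ∀ᶠ k in atTop, ‖xa k - xb k‖ / rb k + R * (ra k / rb k) ≤ R :=
      hnest.mono fun k hk => (ball_mul_subset_ball_mul_iff (hra k) (hrb k) hR).1 hk
    have hratio : ∀ᶠ k in atTop, ra k / rb k ≤ 1 := hbound.mono fun k hk => by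
      have : 0 ≤ ‖xa k - xb k‖ / rb k := div_nonneg (norm_nonneg _) (hrb k).le
      nlinarith
    have hdist : ∀ᶠ k in atTop, ‖xa k - xb k‖ / rb k ≤ R := hbound.mono fun k hk => by
      have : 0 ≤ R * (ra k / rb k) := mul_nonneg hR.le (div_pos (hra k) (hrb k)).le
      linarith
    have h0 := hdiff.tendsto_div_zero_of_eventually_le hra hrb hratio hdist
    rcases hd1 h0 with h | h
    · exact absurd ⟨_, hdist⟩ (not_isBoundedUnder_of_tendsto_atTop h)
    · exact ⟨h0, h⟩

/-- `(x^α, r^α) < (x^β, r^β)` iff eventually `D_{R r^α}(x^α) ⊆ D_{R r^β}(x^β)`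
for some `R > 0`. -/
theorem blowupLT_iff_disks_nested
    (xa xb : ℕ → E2) (ra rb : ℕ → ℝ)
    (hra : ∀ k, 0 < ra k) (hrb : ∀ k, 0 < rb k)
    (hra0 : Tendsto ra atTop (nhds 0)) (hrb0 : Tendsto rb atTop (nhds 0))
    (hdiff : EssDiff xa ra xb rb)
    (hd1 : Dichotomy xa ra xb rb) (hd2 : Dichotomy xb rb xa ra) :
    BlowupLT xa ra xb rb ↔
      ∃ R : ℝ, 0 < R ∧ ∀ᶠ k in atTop,
        Metric.ball (xa k) (R * ra k) ⊆ Metric.ball (xb k) (R * rb k) :=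
  blowupLT_iff_disks_nested_general xa xb ra rb hra hrb hdiff hd1
end
end

section
/- Let (x_k^α, r_k^α), (x_k^β, r_k^β), (x_k^γ, r_k^γ) be blowup sequences satisfying the dichotomy assumption (whenever r_k^i/r_k^j → 0 either |x_k^i − x_k^j|/r_k^j → ∞ or (x_k^i − x_k^j)/r_k^j converges). Suppose (x_k^α, r_k^α) and (x_k^β, r_k^β) are essentially different and both are right on top of (x_k^γ, r_k^γ). Then for any fixed R > 0 and all sufficiently large k, the disks D_{R r_k^α}(x_k^α) and D_{R r_k^β}(x_k^β) are disjoint. -/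
open Topology Metric Set Filter

noncomputable section

abbrev Ed (d : ℕ) := EuclideanSpace ℝ (Fin d)

/-- Dirichlet energy of a map `u : ℝ² → ℝᵈ` on a set `U`. -/
noncomputable def energy {d : ℕ} (u : E2 → Ed d) (U : Set E2) : ℝ :=
  ∫ x in U, ‖fderiv ℝ u x‖ ^ 2

/-- The (flat) Laplacian of a map `u : ℝ² → ℝᵈ`. -/
noncomputable def lapl {d : ℕ} (u : E2 → Ed d) (x : E2) : Ed d :=
  ∑ i : Fin 2, fderiv ℝ (fun y => fderiv ℝ u y (EuclideanSpace.single i (1:ℝ))) x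
      (EuclideanSpace.single i (1:ℝ))

/-- `u` is a harmonic map from `U ⊆ ℝ²` into the (sub)manifold `Nset ⊆ ℝᵈ`:
it is smooth, maps into `Nset`, and its Laplacian is orthogonal to the tangent
space (tangent cone) of `Nset` at each image point. -/
def IsHarmonicMapInto {d : ℕ} (Nset : Set (Ed d)) (U : Set E2) (u : E2 → Ed d) : Prop :=
  ContDiffOn ℝ (⊤ : ℕ∞) u U ∧ Set.MapsTo u U Nset ∧
    ∀ x ∈ U, ∀ v ∈ tangentConeAt ℝ Nset (u x), (inner ℝ (lapl u x) v : ℝ) = 0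

/-- `(xs, rs)` is a blowup sequence of the sequence of maps `u k` at the point `p`,
with bubble `v` : the centers tend to `p`, the radii tend to `0`, and the rescaled
maps `x ↦ u k (xs k + rs k • x)` converge, uniformly on compact subsets of the
complement of a finite singular set, to `v`, which has positive energy. -/
structure IsBlowupSeq {d : ℕ} (u : ℕ → E2 → Ed d) (xs : ℕ → E2) (rs : ℕ → ℝ)
    (p : E2) (v : E2 → Ed d) : Prop where
  r_pos : ∀ k, 0 < rs k
  x_lim : Tendsto xs atTop (nhds p)
  r_lim : Tendsto rs atTop (nhds 0)
  conv : ∃ S : Set E2, S.Finite ∧ ∀ K ⊆ Sᶜ, IsCompact K →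
    TendstoUniformlyOn (fun k x => u k (xs k + rs k • x)) v atTop K
  nonconst : 0 < energy v Set.univ

/-- `(x1, r1)` is right on top of `(x2, r2)` (relative to the sequence of maps `u`):
`(x1,r1) < (x2,r2)` and there is no blowup sequence of `{u_k}` at `0` essentially
different from both, strictly between them. -/
def RightOnTop {d : ℕ} (u : ℕ → E2 → Ed d)
    (x1 : ℕ → E2) (r1 : ℕ → ℝ) (x2 : ℕ → E2) (r2 : ℕ → ℝ) : Prop :=
  BlowupLT x1 r1 x2 r2 ∧
    ¬ ∃ (xd : ℕ → E2) (rd : ℕ → ℝ) (vd : E2 → Ed d),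
      IsBlowupSeq u xd rd 0 vd ∧ EssDiff xd rd x1 r1 ∧ EssDiff xd rd x2 r2 ∧
      BlowupLT x1 r1 xd rd ∧ BlowupLT xd rd x2 r2

/-- If a quotient of positive quantities tends to `0`, its reciprocal tends to `∞`. -/
lemma inv_ratio_atTop_aux {f g : ℕ → ℝ} (hf : ∀ k, 0 < f k) (hg : ∀ k, 0 < g k)
    (h : Tendsto (fun k => f k / g k) atTop (nhds 0)) :
    Tendsto (fun k => g k / f k) atTop atTop := by
  have h' : Tendsto (fun k => f k / g k) atTop (𝓝[>] 0) := by
    rw [tendsto_nhdsWithin_iff]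
    exact ⟨h, Filter.Eventually.of_forall fun k => div_pos (hf k) (hg k)⟩
  have h2 := h'.inv_tendsto_nhdsGT_zero
  have h3 : (fun k => f k / g k)⁻¹ = fun k => g k / f k := by
    funext k; simp [inv_div]
  rwa [h3] at h2

/-- If a quotient of positive quantities tends to `∞`, its reciprocal tends to `0`. -/
lemma ratio_tendsto_zero_aux {f g : ℕ → ℝ}
    (h : Tendsto (fun k => f k / g k) atTop atTop) :
    Tendsto (fun k => g k / f k) atTop (nhds 0) := by
  have h2 := h.inv_tendsto_atTop
  have h3 : (fun k => f k / g k)⁻¹ = fun k => g k / f k := by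
    funext k; simp [inv_div]
  rwa [h3] at h2

/-- Main auxiliary step: in the case `ra/rb → ∞`, the normalized distance diverges. -/
lemma aux_dist_tendsto {d : ℕ} {u : ℕ → E2 → Ed d}
    {xa xb xc : ℕ → E2} {ra rb rc : ℕ → ℝ} {va vc : E2 → Ed d}
    (hba : IsBlowupSeq u xa ra 0 va) (hbc : IsBlowupSeq u xc rc 0 vc)
    (hrb : ∀ k, 0 < rb k)
    (hd2 : Dichotomy xb rb xa ra)
    (hlt : BlowupLT xa ra xc rc)
    (htop2 : RightOnTop u xb rb xc rc)
    (hratio : Tendsto (fun k => ra k / rb k) atTop atTop) :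
    Tendsto (fun k => ‖xa k - xb k‖ / (ra k + rb k)) atTop atTop := by
  have hra := hba.r_pos
  have hrc := hbc.r_pos
  have h0 : Tendsto (fun k => rb k / ra k) atTop (nhds 0) :=
    ratio_tendsto_zero_aux hratio
  rcases hd2 h0 with hdiv | ⟨z, hz⟩
  · -- `‖xb - xa‖ / ra → ∞`
    have hev : ∀ᶠ k in atTop,
        (1/2) * (‖xb k - xa k‖ / ra k) ≤ ‖xa k - xb k‖ / (ra k + rb k) := by
      filter_upwards [hratio.eventually_ge_atTop 1] with k hk
      have hrab : rb k ≤ ra k := by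
        rw [le_div_iff₀ (hrb k)] at hk; linarith
      have heq : (1/2) * (‖xb k - xa k‖ / ra k) = ‖xa k - xb k‖ / (2 * ra k) := by
        rw [norm_sub_rev]; ring
      rw [heq]
      exact div_le_div_of_nonneg_left (norm_nonneg _) (add_pos (hra k) (hrb k))
        (by linarith)
    exact tendsto_atTop_mono' atTop hev (hdiv.const_mul_atTop one_half_pos)
  · -- contradiction with `RightOnTop xb rb xc rc`
    exfalso
    apply htop2.2
    refine ⟨xa, ra, va, hba, Or.inl hratio, ?_, ⟨h0, z, hz⟩, hlt⟩
    exact Or.inr (Or.inl (inv_ratio_atTop_aux hra hrc hlt.1))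

/-- if `(x^α, r^α)` and `(x^β, r^β)` are essentially different blowup
sequences, both right on top of `(x^γ, r^γ)`, then for every `R > 0` the disks
`D_{R r^α}(x^α)` and `D_{R r^β}(x^β)` are eventually disjoint. -/
theorem disks_of_sequences_right_on_top_disjoint
    {d : ℕ} (Nset : Set (Ed d)) (hN : IsCompact Nset)
    (u : ℕ → E2 → Ed d)
    (hharm : ∀ k, IsHarmonicMapInto Nset (Metric.ball (0 : E2) 1) (u k))
    (xa xb xc : ℕ → E2) (ra rb rc : ℕ → ℝ) (va vb vc : E2 → Ed d)
    (hba : IsBlowupSeq u xa ra 0 va) (hbb : IsBlowupSeq u xb rb 0 vb)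
    (hbc : IsBlowupSeq u xc rc 0 vc)
    (hd1 : Dichotomy xa ra xb rb) (hd2 : Dichotomy xb rb xa ra)
    (hd3 : Dichotomy xa ra xc rc) (hd4 : Dichotomy xc rc xa ra)
    (hd5 : Dichotomy xb rb xc rc) (hd6 : Dichotomy xc rc xb rb)
    (hdiff : EssDiff xa ra xb rb)
    (htop1 : RightOnTop u xa ra xc rc) (htop2 : RightOnTop u xb rb xc rc)
    (R : ℝ) (hR : 0 < R) :
    ∀ᶠ k in atTop,
      Disjoint (Metric.ball (xa k) (R * ra k)) (Metric.ball (xb k) (R * rb k)) := by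
  have hra := hba.r_pos
  have hrb := hbb.r_pos
  suffices h : Tendsto (fun k => ‖xa k - xb k‖ / (ra k + rb k)) atTop atTop by
    filter_upwards [h.eventually_ge_atTop R] with k hk
    apply Metric.ball_disjoint_ball
    have hpos : 0 < ra k + rb k := add_pos (hra k) (hrb k)
    rw [le_div_iff₀ hpos] at hk
    rw [dist_eq_norm]
    nlinarith
  rcases hdiff with hab | hba' | hd
  · exact aux_dist_tendsto hba hbc hrb hd2 htop1.1 htop2 hab
  · have := aux_dist_tendsto hbb hbc hra hd1 htop2.1 htop1 hba'
    have heq : (fun k => ‖xb k - xa k‖ / (rb k + ra k))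
        = fun k => ‖xa k - xb k‖ / (ra k + rb k) := by
      funext k; rw [norm_sub_rev, add_comm]
    rwa [heq] at this
  · exact hd
end
end
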